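/- For a consistently connected cyclic system of rank 4 (the EPR–Bohm system) of ±1-valued random variables with product expectations e₁ = ⟨R₁¹R₂¹⟩, e₂ = ⟨R₂²R₃²⟩, e₃ = ⟨R₃³R₄³⟩, e₄ = ⟨R₄⁴R₁⁴⟩, a noncontextual (maximally connected) coupling exists if and only if s_odd(e₁,e₂,e₃,e₄) ≤ 2, where s_odd is the maximum of ±e₁±e₂±e₃±e₄ over sign choices with an odd number of minus signs (the CHSH inequalities). -/

import Mathlib

/-!
Necessity: for every assignment of values `±1` to `X₀, …, X₃`, the four numbers `εᵢ Xᵢ Xᵢ₊₁`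
have product `∏ εᵢ · ∏ Xᵢ² = -1`, so they are not all `1` and their sum is at most `2`; averaging
over a coupling bounds the CHSH sums of the correlations.

Sufficiency: add the chord between `X₀` and `X₂`. Joint laws of `(X₀, X₁, X₂)` with marginals
`μ 0`, `μ 1` exist exactly for the values of `P(X₀ = X₂ = 1)` in an interval whose endpoints are
sums of Fréchet bounds of the conditional tables given `X₁`; likewise for `(X₂, X₃, X₀)` with
`μ 2`, `μ 3`. Comparing the endpoints of the two intervals gives sixteen linear inequalities, each
either trivial or a CHSH inequality, so the intervals meet. For a common value the two triples
have the same law of `(X₀, X₂)`, and gluing them conditionally independently over `(X₀, X₂)`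
gives the coupling.
-/

open Finset

theorem sum_mul_eq_sum_comp_mul_of_fiber {α β R : Type*} [Fintype α] [Fintype β]
    [DecidableEq β] [CommSemiring R] {f : α → β} {ν : α → R} {μ : β → R}
    (h : ∀ b, ∑ x ∈ univ with f x = b, ν x = μ b) (g : β → R) :
    ∑ b, g b * μ b = ∑ x, g (f x) * ν x := by
  rw [← sum_fiberwise univ f]
  refine sum_congr rfl fun b _ => ?_
  rw [← h, mul_sum]
  exact sum_congr rfl fun x hx => by rw [(mem_filter.1 hx).2]

theorem Fin.sum_univ_four_pi {α M : Type*} [Fintype α] [AddCommMonoid M] (G : (Fin 4 → α) → M) :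
    ∑ x, G x = ∑ a, ∑ b, ∑ c, ∑ d, G ![a, b, c, d] := by
  have hx (x : Fin 4 → α) : ![x 0, x 1, x 2, x 3] = x := by ext i; fin_cases i <;> rfl
  simp only [← Fintype.sum_prod_type']
  exact Fintype.sum_equiv (⟨fun x => (x 0, x 1, x 2, x 3),
    fun p => ![p.1, p.2.1, p.2.2.1, p.2.2.2], hx, fun _ => rfl⟩ : (Fin 4 → α) ≃ α × α × α × α)
    _ _ fun x => congrArg G (hx x).symm

theorem exists_mem_Icc_sum_eq {ι : Type*} [Fintype ι] {lo hi : ι → ℝ} {c : ℝ}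
    (hle : ∀ i, lo i ≤ hi i) (hlo : ∑ i, lo i ≤ c) (hhi : c ≤ ∑ i, hi i) :
    ∃ f : ι → ℝ, (∀ i, lo i ≤ f i ∧ f i ≤ hi i) ∧ ∑ i, f i = c := by
  have hcont : ContinuousOn (fun t : ℝ => ∑ i, (lo i + t * (hi i - lo i))) (Set.Icc 0 1) := by
    fun_prop
  obtain ⟨t, ⟨ht₀, ht₁⟩, hsum⟩ := intermediate_value_Icc zero_le_one hcont
    ⟨by simpa using hlo, by simpa using hhi⟩
  refine ⟨fun i => lo i + t * (hi i - lo i), fun i => ⟨?_, ?_⟩, hsum⟩ <;>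
    nlinarith [hle i]

theorem exists_glue {α β γ : Type*} [Fintype α] [Fintype γ] {P : α → β → ℝ} {Q : β → γ → ℝ}
    (hP : ∀ a b, 0 ≤ P a b) (hQ : ∀ b c, 0 ≤ Q b c) (hPQ : ∀ b, ∑ a, P a b = ∑ c, Q b c) :
    ∃ R : α → β → γ → ℝ, (∀ a b c, 0 ≤ R a b c) ∧ (∀ a b, ∑ c, R a b c = P a b) ∧
      ∀ b c, ∑ a, R a b c = Q b c := by
  refine ⟨fun a b c => P a b * Q b c / ∑ a', P a' b, fun a b c => ?_, fun a b => ?_, fun b c => ?_⟩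
  · exact div_nonneg (mul_nonneg (hP a b) (hQ b c)) (sum_nonneg fun a' _ => hP a' b)
  · rw [← sum_div, ← mul_sum, ← hPQ]
    by_cases hb : ∑ a', P a' b = 0
    · have hab : P a b = 0 := congrFun ((Fintype.sum_eq_zero_iff_of_nonneg (hP · b)).1 hb) a
      simp [hb, hab]
    · exact mul_div_cancel_right₀ _ hb
  · rw [← sum_div, ← sum_mul]
    by_cases hb : ∑ a', P a' b = 0
    · have hbc : Q b c = 0 :=
        congrFun ((Fintype.sum_eq_zero_iff_of_nonneg (hQ b)).1 (hPQ b ▸ hb)) c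
      simp [hb, hbc]
    · exact mul_div_cancel_left₀ _ hb

theorem Bool.table_eq_of_sum_eq {g h : Bool → Bool → ℝ} (hrow : ∀ a, ∑ c, g a c = ∑ c, h a c)
    (hcol : ∀ c, ∑ a, g a c = ∑ a, h a c) (htt : g true true = h true true) (a c : Bool) :
    g a c = h a c := by
  have r₁ := hrow true; have r₂ := hrow false; have c₁ := hcol true; have c₂ := hcol false
  simp only [Fintype.sum_bool] at r₁ r₂ c₁ c₂
  cases a <;> cases c <;> linarith

theorem sum_le_two_of_prod_eq_neg_one {a : Fin 4 → ℝ} (ha : ∀ i, a i = 1 ∨ a i = -1)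
    (hprod : ∏ i, a i = -1) : ∑ i, a i ≤ 2 := by
  rw [Fin.prod_univ_four] at hprod
  rw [Fin.sum_univ_four]
  rcases ha 0 with h₀ | h₀ <;> rcases ha 1 with h₁ | h₁ <;> rcases ha 2 with h₂ | h₂ <;>
    rcases ha 3 with h₃ | h₃ <;> rw [h₀, h₁, h₂, h₃] at hprod ⊢ <;> norm_num at hprod <;> norm_num

/-- For `(X, Y) ∼ P` and `(Y, Z) ∼ Q`, a joint law of `(X, Y, Z)` can give `X = Z = true` any
probability between `frechetLower P Q` and `frechetUpper P Q`: these are the sums over `y` of the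
Fréchet bounds for the conditional `2 × 2` table of `(X, Z)` given `Y = y`. -/
def frechetLower (P Q : Bool × Bool → ℝ) : ℝ :=
  ∑ y, max 0 (P (true, y) + Q (y, true) - ∑ x, P (x, y))

def frechetUpper (P Q : Bool × Bool → ℝ) : ℝ :=
  ∑ y, min (P (true, y)) (Q (y, true))

section Frechet

variable {P Q : Bool × Bool → ℝ}

theorem frechetLower_term_le_frechetUpper_term (hP : ∀ z, 0 ≤ P z) (hQ : ∀ z, 0 ≤ Q z)
    (hPQ : ∀ y, ∑ x, P (x, y) = ∑ z, Q (y, z)) (y : Bool) :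
    max 0 (P (true, y) + Q (y, true) - ∑ x, P (x, y)) ≤ min (P (true, y)) (Q (y, true)) := by
  have := hPQ y
  simp only [Fintype.sum_bool] at this ⊢
  exact max_le (le_min (hP _) (hQ _))
    (le_min (by linarith [hQ (y, false)]) (by linarith [hP (false, y)]))

theorem frechetLower_le_frechetUpper (hP : ∀ z, 0 ≤ P z) (hQ : ∀ z, 0 ≤ Q z)
    (hPQ : ∀ y, ∑ x, P (x, y) = ∑ z, Q (y, z)) : frechetLower P Q ≤ frechetUpper P Q :=
  sum_le_sum fun y _ => frechetLower_term_le_frechetUpper_term hP hQ hPQ y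

theorem exists_triple_of_frechet (hP : ∀ z, 0 ≤ P z) (hQ : ∀ z, 0 ≤ Q z)
    (hPQ : ∀ y, ∑ x, P (x, y) = ∑ z, Q (y, z)) {c : ℝ}
    (hlo : frechetLower P Q ≤ c) (hhi : c ≤ frechetUpper P Q) :
    ∃ t : Bool → Bool → Bool → ℝ, (∀ x y z, 0 ≤ t x y z) ∧ (∀ x y, ∑ z, t x y z = P (x, y)) ∧
      (∀ y z, ∑ x, t x y z = Q (y, z)) ∧ ∑ y, t true y true = c := by
  obtain ⟨f, hf, rfl⟩ :=
    exists_mem_Icc_sum_eq (frechetLower_term_le_frechetUpper_term hP hQ hPQ) hlo hhi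
  refine ⟨fun x y z => match x, z with
    | true, true => f y
    | true, false => P (true, y) - f y
    | false, true => Q (y, true) - f y
    | false, false => P (false, y) - Q (y, true) + f y, ?_, ?_, ?_, rfl⟩
  · intro x y z
    have := hPQ y
    obtain ⟨hlo, hhi⟩ := hf y
    simp only [Fintype.sum_bool, max_le_iff, le_min_iff] at this hlo hhi
    cases x <;> cases z <;> dsimp only <;> linarith
  · rintro (_ | _) y <;> simp only [Fintype.sum_bool] <;> ring
  · intro y z
    have := hPQ y
    simp only [Fintype.sum_bool] at this ⊢
    cases z <;> dsimp only <;> linarith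

end Frechet

def spin (b : Bool) : ℝ := if b then 1 else -1

def correlation (p : Bool × Bool → ℝ) : ℝ := ∑ z, spin z.1 * spin z.2 * p z

theorem correlation_eq (p : Bool × Bool → ℝ) :
    correlation p = p (true, true) - p (true, false) - p (false, true) + p (false, false) := by
  simp only [correlation, spin, Fintype.sum_prod_type, Fintype.sum_bool]
  norm_num
  ring

/-- `μ i` is the joint law of `(X i, X (i + 1))`, indices mod 4, with `true` standing for `+1`. -/
structure IsCyclicSystem (μ : Fin 4 → Bool × Bool → ℝ) : Prop where
  nonneg : ∀ i z, 0 ≤ μ i z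
  sum_eq_one : ∀ i, ∑ z, μ i z = 1
  consistent : ∀ i (v : Bool), ∑ u, μ i (u, v) = ∑ w, μ (i + 1) (v, w)

def IsCoupling (ν : (Fin 4 → Bool) → ℝ) (μ : Fin 4 → Bool × Bool → ℝ) : Prop :=
  (∀ x, 0 ≤ ν x) ∧ (∑ x, ν x = 1) ∧
    ∀ i (a b : Bool), ∑ x ∈ univ with x i = a ∧ x (i + 1) = b, ν x = μ i (a, b)

def SatisfiesCHSH (μ : Fin 4 → Bool × Bool → ℝ) : Prop :=
  ∀ ε : Fin 4 → ℝ, (∀ i, ε i = 1 ∨ ε i = -1) → ∏ i, ε i = -1 →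
    ∑ i, ε i * correlation (μ i) ≤ 2

section CyclicSystem

variable {μ : Fin 4 → Bool × Bool → ℝ}

theorem IsCyclicSystem.rotate (hμ : IsCyclicSystem μ) (k : Fin 4) :
    IsCyclicSystem fun i => μ (i + k) where
  nonneg i := hμ.nonneg (i + k)
  sum_eq_one i := hμ.sum_eq_one (i + k)
  consistent i v := by rw [add_right_comm]; exact hμ.consistent (i + k) v

theorem SatisfiesCHSH.rotate (h : SatisfiesCHSH μ) (k : Fin 4) :
    SatisfiesCHSH fun i => μ (i + k) := by
  intro ε hε hprod
  have := h (fun i => ε (i - k)) (fun i => hε _)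
    (by rwa [← Equiv.prod_comp (Equiv.subRight k) ε] at hprod)
  rw [← Equiv.sum_comp (Equiv.addRight k)] at this
  simpa using this

theorem chsh_spin_le_two {ε : Fin 4 → ℝ} (hε : ∀ i, ε i = 1 ∨ ε i = -1) (hprod : ∏ i, ε i = -1)
    (x : Fin 4 → Bool) : ∑ i, ε i * (spin (x i) * spin (x (i + 1))) ≤ 2 := by
  have hspin (b : Bool) : spin b = 1 ∨ spin b = -1 := by cases b <;> simp [spin]
  refine sum_le_two_of_prod_eq_neg_one (fun i => ?_) ?_
  · rcases hε i with h | h <;> rcases hspin (x i) with h' | h' <;>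
      rcases hspin (x (i + 1)) with h'' | h'' <;> simp [h, h', h'']
  · have hsq : (∏ i, spin (x i)) ^ 2 = 1 := by
      rw [← prod_pow]
      exact prod_eq_one fun i _ => by rcases hspin (x i) with h | h <;> simp [h]
    have hshift : ∏ i, spin (x (i + 1)) = ∏ i, spin (x i) :=
      Fintype.prod_equiv (Equiv.addRight 1) _ _ fun _ => rfl
    rw [prod_mul_distrib, prod_mul_distrib, hshift, ← sq, hsq, hprod, mul_one]

theorem IsCoupling.satisfiesCHSH {ν : (Fin 4 → Bool) → ℝ} (hν : IsCoupling ν μ) :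
    SatisfiesCHSH μ := by
  obtain ⟨hν₀, hν₁, hνμ⟩ := hν
  intro ε hε hprod
  have hcorr (i : Fin 4) : correlation (μ i) = ∑ x, spin (x i) * spin (x (i + 1)) * ν x :=
    sum_mul_eq_sum_comp_mul_of_fiber (f := fun x : Fin 4 → Bool => (x i, x (i + 1)))
      (fun z => by simpa only [Prod.ext_iff] using hνμ i z.1 z.2) fun z => spin z.1 * spin z.2
  calc ∑ i, ε i * correlation (μ i)
      = ∑ x, (∑ i, ε i * (spin (x i) * spin (x (i + 1)))) * ν x := by
        simp only [hcorr, mul_sum, sum_mul, mul_assoc]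
        exact sum_comm
    _ ≤ ∑ x, 2 * ν x := by
        gcongr with x
        · exact hν₀ x
        · exact chsh_spin_le_two hε hprod x
    _ = 2 := by rw [← mul_sum, hν₁, mul_one]

theorem SatisfiesCHSH.le_two (h : SatisfiesCHSH μ) {ε₀ ε₁ ε₂ ε₃ : ℝ} (h₀ : ε₀ = 1 ∨ ε₀ = -1)
    (h₁ : ε₁ = 1 ∨ ε₁ = -1) (h₂ : ε₂ = 1 ∨ ε₂ = -1) (h₃ : ε₃ = 1 ∨ ε₃ = -1)
    (hprod : ε₀ * ε₁ * ε₂ * ε₃ = -1) :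
    ε₀ * correlation (μ 0) + ε₁ * correlation (μ 1) + ε₂ * correlation (μ 2) +
      ε₃ * correlation (μ 3) ≤ 2 := by
  simpa [Fin.sum_univ_four] using h ![ε₀, ε₁, ε₂, ε₃]
    (fun i => by fin_cases i <;> assumption) (by simpa [Fin.prod_univ_four] using hprod)

theorem IsCyclicSystem.frechetLower_le_frechetUpper_of_satisfiesCHSH (hμ : IsCyclicSystem μ)
    (h : SatisfiesCHSH μ) : frechetLower (μ 0) (μ 1) ≤ frechetUpper (μ 2) (μ 3) := by
  have k₁ := h.le_two (.inl rfl) (.inl rfl) (.inr rfl) (.inl rfl) (by norm_num)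
  have k₂ := h.le_two (.inl rfl) (.inl rfl) (.inl rfl) (.inr rfl) (by norm_num)
  have k₃ := h.le_two (.inr rfl) (.inr rfl) (.inl rfl) (.inr rfl) (by norm_num)
  have k₄ := h.le_two (.inr rfl) (.inr rfl) (.inr rfl) (.inl rfl) (by norm_num)
  have hpos (i : Fin 4) (x y : Bool) := hμ.nonneg i (x, y)
  have hsum (i : Fin 4) := hμ.sum_eq_one i
  have c₀ := hμ.consistent 0
  have c₁ := hμ.consistent 1
  have c₂ := hμ.consistent 2
  have c₃ := hμ.consistent 3
  simp only [correlation_eq] at k₁ k₂ k₃ k₄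
  simp only [Fintype.sum_prod_type, Fintype.sum_bool, Fin.reduceAdd] at hsum c₀ c₁ c₂ c₃
  simp only [frechetLower, frechetUpper, Fintype.sum_bool, ← max_add_add_right,
    ← max_add_add_left, max_le_iff, ← min_add_add_left, ← min_add_add_right, le_min_iff]
  and_intros <;> linarith [hpos 0 true true, hpos 0 true false, hpos 0 false true,
    hpos 0 false false, hpos 1 true true, hpos 1 true false, hpos 1 false true, hpos 1 false false,
    hpos 2 true true, hpos 2 true false, hpos 2 false true, hpos 2 false false,
    hpos 3 true true, hpos 3 true false, hpos 3 false true, hpos 3 false false,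
    hsum 0, hsum 1, hsum 2, hsum 3, c₀ true, c₀ false, c₁ true, c₁ false,
    c₂ true, c₂ false, c₃ true, c₃ false]

theorem isCoupling_of_marginals {F : Bool → Bool → Bool → Bool → ℝ}
    (hF : ∀ a b c d, 0 ≤ F a b c d)
    (h₀ : ∀ a b, ∑ c, ∑ d, F a b c d = μ 0 (a, b))
    (h₁ : ∀ b c, ∑ a, ∑ d, F a b c d = μ 1 (b, c))
    (h₂ : ∀ c d, ∑ a, ∑ b, F a b c d = μ 2 (c, d))
    (h₃ : ∀ d a, ∑ b, ∑ c, F a b c d = μ 3 (d, a)) (hsum : ∑ z, μ 0 z = 1) :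
    IsCoupling (fun x => F (x 0) (x 1) (x 2) (x 3)) μ := by
  refine ⟨fun x => hF _ _ _ _, ?_, fun i a b => ?_⟩
  · rw [Fin.sum_univ_four_pi, ← hsum, Fintype.sum_prod_type]
    simp only [Matrix.cons_val_zero, Matrix.cons_val_one, Matrix.cons_val_two,
      Matrix.cons_val_three, Matrix.head_cons, Matrix.tail_cons, h₀]
  · rw [sum_filter, Fin.sum_univ_four_pi]
    obtain rfl | rfl | rfl | rfl : i = 0 ∨ i = 1 ∨ i = 2 ∨ i = 3 := by fin_cases i <;> simp
    · rw [← h₀]; cases a <;> cases b <;> simp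
    · rw [← h₁]; cases a <;> cases b <;> simp
    · rw [← h₂]; cases a <;> cases b <;> simp
    · rw [← h₃]; cases a <;> cases b <;> simp

theorem IsCyclicSystem.exists_isCoupling_of_triples (hμ : IsCyclicSystem μ)
    {t s : Bool → Bool → Bool → ℝ} (ht : ∀ x y z, 0 ≤ t x y z)
    (ht₀ : ∀ x y, ∑ z, t x y z = μ 0 (x, y)) (ht₁ : ∀ y z, ∑ x, t x y z = μ 1 (y, z))
    (hs : ∀ x y z, 0 ≤ s x y z)
    (hs₂ : ∀ x y, ∑ z, s x y z = μ 2 (x, y)) (hs₃ : ∀ y z, ∑ x, s x y z = μ 3 (y, z))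
    (hts : ∀ a c, ∑ b, t a b c = ∑ d, s c d a) : ∃ ν, IsCoupling ν μ := by
  obtain ⟨R, hR, hRt, hRs⟩ := exists_glue (P := fun b (ac : Bool × Bool) => t ac.1 b ac.2)
    (Q := fun ac d => s ac.2 d ac.1) (fun _ _ => ht _ _ _) (fun _ _ => hs _ _ _)
    fun ac => hts ac.1 ac.2
  refine ⟨_, isCoupling_of_marginals (F := fun a b c d => R b (a, c) d)
    (fun _ _ _ _ => hR _ _ _) (fun a b => ?_) (fun b c => ?_) (fun c d => ?_) (fun d a => ?_)
    (hμ.sum_eq_one 0)⟩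
  · simp only [hRt, ht₀]
  · simp only [hRt, ht₁]
  · simp only [hRs, hs₂]
  · rw [sum_comm]
    simp only [hRs, hs₃]

theorem IsCyclicSystem.exists_isCoupling (hμ : IsCyclicSystem μ) (h : SatisfiesCHSH μ) :
    ∃ ν, IsCoupling ν μ := by
  have hA := frechetLower_le_frechetUpper (hμ.nonneg 0) (hμ.nonneg 1) (hμ.consistent 0)
  have hB := frechetLower_le_frechetUpper (hμ.nonneg 2) (hμ.nonneg 3) (hμ.consistent 2)
  have hAB := hμ.frechetLower_le_frechetUpper_of_satisfiesCHSH h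
  have hBA : frechetLower (μ 2) (μ 3) ≤ frechetUpper (μ 0) (μ 1) :=
    (hμ.rotate 2).frechetLower_le_frechetUpper_of_satisfiesCHSH (h.rotate 2)
  set p := max (frechetLower (μ 0) (μ 1)) (frechetLower (μ 2) (μ 3))
  obtain ⟨t, ht, ht₀, ht₁, htc⟩ := exists_triple_of_frechet (hμ.nonneg 0) (hμ.nonneg 1)
    (hμ.consistent 0) (le_max_left _ _) (max_le hA hBA : p ≤ _)
  obtain ⟨s, hs, hs₂, hs₃, hsc⟩ := exists_triple_of_frechet (hμ.nonneg 2) (hμ.nonneg 3)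
    (hμ.consistent 2) (le_max_right _ _) (max_le hAB hB : p ≤ _)
  refine hμ.exists_isCoupling_of_triples ht ht₀ ht₁ hs hs₂ hs₃ <|
    Bool.table_eq_of_sum_eq (fun a => ?_) (fun c => ?_) (htc.trans hsc.symm)
  · rw [sum_comm, sum_comm (f := fun c d => s c d a)]
    simp only [ht₀, hs₃]
    exact hμ.consistent 3 a |>.symm
  · rw [sum_comm, sum_comm (f := fun a d => s c d a)]
    simp only [ht₁, hs₂]
    exact hμ.consistent 1 c

end CyclicSystem

theorem stmt13 (μ : Fin 4 → Bool × Bool → ℝ)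
    (hpos : ∀ i z, 0 ≤ μ i z) (hsum : ∀ i, ∑ z, μ i z = 1)
    (hcons : ∀ i (v : Bool), ∑ u, μ i (u, v) = ∑ w, μ (i + 1) (v, w)) :
    (∃ ν : (Fin 4 → Bool) → ℝ, (∀ x, 0 ≤ ν x) ∧ (∑ x, ν x = 1) ∧
      (∀ i (a b : Bool),
        ∑ x ∈ Finset.univ.filter (fun x : Fin 4 → Bool => x i = a ∧ x (i + 1) = b), ν x
          = μ i (a, b))) ↔
    (∀ ε : Fin 4 → ℝ, (∀ i, ε i = 1 ∨ ε i = -1) → (∏ i, ε i) = -1 →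
      ∑ i, ε i * (∑ z : Bool × Bool,
        (if z.1 then (1 : ℝ) else -1) * (if z.2 then (1 : ℝ) else -1) * μ i z) ≤ 2) :=
  ⟨fun ⟨_, hν⟩ => IsCoupling.satisfiesCHSH hν,
    IsCyclicSystem.exists_isCoupling ⟨hpos, hsum, hcons⟩⟩
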